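/- arXiv:math/0005310 — 2 statements merged into one kernel-verified Lean document; each statement's English description precedes it below -/
import Mathlib

section
/- Let L/K be a finite Galois extension with group G, let W be a valuation ring of L lying over a valuation ring V of K with residue characteristic p > 0, and let 𝔓 be the maximal ideal of W. Define the inertia group T = { σ ∈ G : σ(W) = W and σ induces the identity on W/𝔓 } and the ramification group R = { σ ∈ T : σ(x)/x ≡ 1 mod 𝔓 for all nonzero x ∈ L }. Then R is the unique p-Sylow subgroup of T, and the quotient T/R is an abelian group of order prime to p. -/
section Defs

variable (K : Type*) {L : Type*} [Field K] [Field L] [Algebra K L]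

/-- The inertia group of a valuation subring `W` of `L` in `Gal(L/K)`: automorphisms
stabilizing `W` and acting trivially on the residue field `W/𝔓`, i.e. with
`σ x - x ∈ 𝔓` for all `x ∈ W` (membership in the maximal ideal `𝔓` being expressed by
`W.valuation (·) < 1`). -/
def inertiaGrp (W : ValuationSubring L) : Subgroup (L ≃ₐ[K] L) where
  carrier := {σ | (∀ x : L, σ x ∈ W ↔ x ∈ W) ∧
    ∀ x : L, x ∈ W → W.valuation (σ x - x) < 1}
  one_mem' := by
    refine ⟨fun x => Iff.rfl, fun x hx => ?_⟩
    simp only [AlgEquiv.one_apply, sub_self, map_zero]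
    exact zero_lt_one
  mul_mem' := by
    rintro a b ⟨ha1, ha2⟩ ⟨hb1, hb2⟩
    refine ⟨fun x => (ha1 (b x)).trans (hb1 x), fun x hx => ?_⟩
    have h1 : W.valuation (a (b x) - b x) < 1 := ha2 (b x) ((hb1 x).mpr hx)
    have h2 := hb2 x hx
    have h3 := (W.valuation.map_add (a (b x) - b x) (b x - x)).trans_lt
      (max_lt h1 h2)
    simpa [sub_add_sub_cancel] using h3
  inv_mem' := by
    rintro a ⟨ha1, ha2⟩
    have key : ∀ x : L, a ((a⁻¹ : L ≃ₐ[K] L) x) = x := fun x => a.apply_symm_apply x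
    have hiff : ∀ x : L, (a⁻¹ : L ≃ₐ[K] L) x ∈ W ↔ x ∈ W := by
      intro x
      have := ha1 ((a⁻¹ : L ≃ₐ[K] L) x)
      rw [key x] at this
      exact this.symm
    refine ⟨hiff, fun x hx => ?_⟩
    have hy : (a⁻¹ : L ≃ₐ[K] L) x ∈ W := (hiff x).mpr hx
    have h4 := ha2 _ hy
    rw [key x] at h4
    have : (a⁻¹ : L ≃ₐ[K] L) x - x = -(x - (a⁻¹ : L ≃ₐ[K] L) x) := by ring
    rw [this, Valuation.map_neg]
    exact h4

/-- The ramification group of a valuation subring `W` of `L` in `Gal(L/K)`: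
`R = {σ ∈ T : σ(x)/x ≡ 1 mod 𝔓 for all nonzero x ∈ L}`. -/
def ramificationGrp (W : ValuationSubring L) : Subgroup (L ≃ₐ[K] L) where
  carrier := {σ | σ ∈ inertiaGrp K W ∧
    ∀ x : L, x ≠ 0 → W.valuation (σ x / x - 1) < 1}
  one_mem' := by
    refine ⟨(inertiaGrp K W).one_mem, fun x hx => ?_⟩
    simp only [AlgEquiv.one_apply, div_self hx, sub_self, map_zero]
    exact zero_lt_one
  mul_mem' := by
    rintro a b ⟨haT, ha2⟩ ⟨hbT, hb2⟩
    refine ⟨mul_mem haT hbT, fun x hx => ?_⟩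
    have hbx : b x ≠ 0 := fun h => hx (by simpa using congrArg b.symm (by simpa using h))
    have hA := ha2 (b x) hbx
    have hB := hb2 x hx
    set A := a (b x) / b x with hAdef
    set B := b x / x with hBdef
    have hprod : W.valuation ((A - 1) * (B - 1)) < 1 := by
      rw [Valuation.map_mul]
      calc W.valuation (A - 1) * W.valuation (B - 1)
          ≤ 1 * W.valuation (B - 1) := by have := hA.le; gcongr
        _ = W.valuation (B - 1) := one_mul _
        _ < 1 := hB
    have hAB : A * B = a (b x) / x := div_mul_div_cancel₀ hbx
    have heq : (a * b) x / x - 1 = (A - 1) * (B - 1) + (A - 1) + (B - 1) := by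
      show a (b x) / x - 1 = _
      rw [← hAB]; ring
    rw [heq]
    refine (W.valuation.map_add _ _).trans_lt (max_lt ?_ hB)
    exact (W.valuation.map_add _ _).trans_lt (max_lt hprod hA)
  inv_mem' := by
    rintro a ⟨haT, ha2⟩
    refine ⟨inv_mem haT, fun x hx => ?_⟩
    set y := (a⁻¹ : L ≃ₐ[K] L) x with hy
    have key : a y = x := a.apply_symm_apply x
    have hy0 : y ≠ 0 := fun h => hx (by rw [← key, h, map_zero])
    have h1 : W.valuation (x / y - 1) < 1 := by
      have := ha2 y hy0
      rwa [key] at this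
    have hval1 : W.valuation (x / y) = 1 := by
      by_contra hne
      have : W.valuation (x / y - 1) = max (W.valuation (x / y)) 1 := by
        rw [sub_eq_add_neg]
        rw [Valuation.map_add_of_distinct_val]
        · simp
        · simpa using hne
      rw [this] at h1
      exact absurd h1 (not_lt.mpr (le_max_right _ _))
    have hval2 : W.valuation (y / x) = 1 := by
      have hmul : W.valuation (x / y) * W.valuation (y / x) = 1 := by
        rw [← Valuation.map_mul]
        field_simp
        exact Valuation.map_one _
      rwa [hval1, one_mul] at hmul
    have heq : y / x - 1 = -((x / y - 1) * (y / x)) := by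
      field_simp
      ring
    rw [heq, Valuation.map_neg, Valuation.map_mul, hval2, mul_one]
    exact h1

end Defs

/-!
For `σ ∈ T`, `σ x / x` is a unit of `W` for every `x ≠ 0`: `σ` preserves `W`, so it acts on the
value group by an order automorphism of finite order, which must be trivial. Hence
`θ σ : x ↦ σ x / x mod 𝔓` is a function `Lˣ → kˣ`, and `σ ↦ θ σ` is a homomorphism from `T` to an
abelian group with kernel `R`. So `R` is normal, `T/R` is abelian, and `T/R` has no element of
order `p` because `u ↦ u ^ p` is injective in characteristic `p`. If `τ ∈ R` has prime order
`q`, then for `z = τ a - a ≠ 0` the sum `Σ_{i<q} τ^i z / z` is `0` and is `≡ q mod 𝔓`, so `q = p`.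
Thus `R` is a normal `p`-subgroup of index prime to `p`, the unique Sylow `p`-subgroup of `T`.
-/

open IsLocalRing

section GroupTheory

variable {G : Type*} [Group G] [Finite G] {p : ℕ}

theorem not_dvd_card_of_forall_pow_eq_one [hp : Fact p.Prime] (h : ∀ g : G, g ^ p = 1 → g = 1) :
    ¬ p ∣ Nat.card G := by
  intro hdvd
  obtain ⟨g, hg⟩ := exists_prime_orderOf_dvd_card' p hdvd
  rw [h g (hg ▸ pow_orderOf_eq_one g), orderOf_one] at hg
  exact hp.out.one_lt.ne hg

theorem IsPGroup.of_forall_orderOf_prime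
    (h : ∀ (q : ℕ) (g : G), q.Prime → orderOf g = q → q = p) : IsPGroup p G := by
  refine .of_card (Nat.eq_prime_pow_of_unique_prime_dvd Nat.card_pos.ne' fun {q} hq hdvd => ?_)
  have : Fact q.Prime := ⟨hq⟩
  obtain ⟨g, hg⟩ := exists_prime_orderOf_dvd_card' q hdvd
  exact h q g hq hg

end GroupTheory

theorem Subgroup.card_div_card_eq_relIndex {G : Type*} [Group G] [Finite G] {H K : Subgroup G}
    (h : H ≤ K) :
    Nat.card K / Nat.card H = H.relIndex K := by
  have := relIndex_mul_relIndex ⊥ H K bot_le h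
  rw [relIndex_bot_left, relIndex_bot_left] at this
  rw [← this, Nat.mul_div_cancel_left _ Nat.card_pos]

theorem eq_one_of_pow_expChar_eq_one {ι R : Type*} [CommRing R] [IsReduced R] (p : ℕ)
    [ExpChar R p] {f : ι → Rˣ} (h : f ^ p = 1) : f = 1 := by
  funext i
  refine Units.ext (frobenius_inj R p ?_)
  simpa [frobenius_def] using congrArg (fun f : ι → Rˣ => ((f i : Rˣ) : R)) h

namespace ValuationSubring

variable {K L : Type*} [Field K] [Field L] [Algebra K L] (W : ValuationSubring L)

theorem valuation_le_valuation_iff_div_mem {x y : L} (hy : y ≠ 0) :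
    W.valuation x ≤ W.valuation y ↔ x / y ∈ W := by
  rw [← W.valuation_le_one_iff, map_div₀,
    div_le_one₀ (zero_lt_iff.mpr ((Valuation.ne_zero_iff _).mpr hy))]

theorem valuation_map_eq_of_forall_map_mem_iff {σ : L ≃ₐ[K] L} (hσ : IsOfFinOrder σ)
    (hW : ∀ x, σ x ∈ W ↔ x ∈ W) (x : L) : W.valuation (σ x) = W.valuation x := by
  wlog hle : W.valuation (σ x) ≤ W.valuation x generalizing σ x
  · have hWinv : ∀ y, σ⁻¹ y ∈ W ↔ y ∈ W := fun y => by
      simpa using (hW (σ⁻¹ y)).symm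
    have := this hσ.inv hWinv (σ x) (by simpa using (le_of_not_ge hle))
    simpa using this.symm
  rcases eq_or_ne x 0 with rfl | hx
  · simp
  have hWpow : ∀ n y, (σ ^ n) y ∈ W ↔ y ∈ W := fun n => by
    induction n with
    | zero => simp
    | succ n ih => intro y; rw [pow_succ, AlgEquiv.mul_apply, ih, hW]
  have hanti : Antitone fun n => W.valuation ((σ ^ n) x) := by
    refine antitone_nat_of_succ_le fun n => ?_
    rw [valuation_le_valuation_iff_div_mem W ((map_ne_zero _).mpr hx), pow_succ,
      AlgEquiv.mul_apply, ← map_div₀, hWpow, ← valuation_le_valuation_iff_div_mem W hx]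
    exact hle
  have := hanti hσ.orderOf_pos
  simp only [pow_orderOf_eq_one, pow_one, AlgEquiv.one_apply] at this
  exact le_antisymm hle this

theorem unitGroupToResidueFieldUnits_eq_one_iff (u : W.unitGroup) :
    W.unitGroupToResidueFieldUnits u = 1 ↔ (u : Lˣ) ∈ W.principalUnitGroup := by
  rw [← MonoidHom.mem_ker, ker_unitGroupToResidueFieldUnits, Subgroup.mem_comap]
  rfl

theorem charP_residueField_of_comap_eq {V : ValuationSubring K}
    (hVW : W.comap (algebraMap K L) = V) (p : ℕ) [CharP (ResidueField V) p] :
    CharP (ResidueField W) p := by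
  subst hVW
  let f : W.comap (algebraMap K L) →+* W :=
    (algebraMap K L).restrict (W.comap (algebraMap K L)).toSubring W.toSubring fun _ hx => hx
  have : IsLocalHom f := ⟨fun a ha => by
    obtain ⟨b, hb⟩ := ha.exists_right_inv
    have hab : algebraMap K L a * b = 1 := congrArg Subtype.val hb
    have ha0 : (a : K) ≠ 0 := by rintro h; simp [h] at hab
    have hainv : (a : K)⁻¹ ∈ W.comap (algebraMap K L) := by
      rw [mem_comap, map_inv₀, inv_eq_of_mul_eq_one_right hab]
      exact b.2
    exact IsUnit.of_mul_eq_one ⟨_, hainv⟩ (Subtype.ext (mul_inv_cancel₀ ha0))⟩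
  exact charP_of_injective_ringHom (ResidueField.map f).injective p

end ValuationSubring

section Inertia

variable {K L : Type*} [Field K] [Field L] [Algebra K L] {W : ValuationSubring L}
  {σ : L ≃ₐ[K] L}

theorem valuation_map_eq_of_mem_inertiaGrp [FiniteDimensional K L] (hσ : σ ∈ inertiaGrp K W)
    (x : L) : W.valuation (σ x) = W.valuation x :=
  W.valuation_map_eq_of_forall_map_mem_iff (isOfFinOrder_of_finite σ) hσ.1 x

theorem units_map_div_mem_unitGroup [FiniteDimensional K L] (hσ : σ ∈ inertiaGrp K W)
    (x : Lˣ) : Units.map (σ : L →* L) x / x ∈ W.unitGroup := by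
  rw [ValuationSubring.mem_unitGroup_iff, Units.val_div_eq_div_val, Units.coe_map,
    MonoidHom.coe_coe, map_div₀, valuation_map_eq_of_mem_inertiaGrp hσ,
    div_self ((Valuation.ne_zero_iff _).mpr x.ne_zero)]

theorem units_map_div_mem_principalUnitGroup_iff (x : Lˣ) :
    Units.map (σ : L →* L) x / x ∈ W.principalUnitGroup ↔ W.valuation (σ x / x - 1) < 1 := by
  rw [ValuationSubring.mem_principalUnitGroup_iff, Units.val_div_eq_div_val, Units.coe_map,
    MonoidHom.coe_coe]

theorem units_map_div_mem_principalUnitGroup (hσ : σ ∈ inertiaGrp K W) {u : Lˣ}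
    (hu : u ∈ W.unitGroup) : Units.map (σ : L →* L) u / u ∈ W.principalUnitGroup := by
  rw [units_map_div_mem_principalUnitGroup_iff, div_sub_one u.ne_zero, map_div₀,
    (W.mem_unitGroup_iff u).mp hu, div_one]
  exact hσ.2 u (W.mem_of_valuation_le_one _ hu.le)

theorem mem_ramificationGrp_iff : σ ∈ ramificationGrp K W ↔
    σ ∈ inertiaGrp K W ∧ ∀ x : Lˣ, Units.map (σ : L →* L) x / x ∈ W.principalUnitGroup := by
  simp_rw [units_map_div_mem_principalUnitGroup_iff]
  exact and_congr_right fun _ => ⟨fun h x => h x x.ne_zero, fun h x hx => h (Units.mk0 x hx)⟩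

-- The sum `Σ_{i<n} τ^i z` with `z = τ a - a ≠ 0` telescopes to `τ^n a - a = 0`, while
-- `τ^i z / z ≡ 1 mod 𝔓` for each `i`; hence `n ≡ 0 mod 𝔓`.
theorem valuation_natCast_lt_one_of_pow_eq_one {τ : L ≃ₐ[K] L} (hτ : τ ∈ ramificationGrp K W)
    (hτ1 : τ ≠ 1) {n : ℕ} (hn : τ ^ n = 1) : W.valuation (n : L) < 1 := by
  obtain ⟨a, ha⟩ : ∃ a, τ a ≠ a := not_forall.mp (mt (fun h => AlgEquiv.ext h) hτ1)
  have hz : τ a - a ≠ 0 := sub_ne_zero.mpr ha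
  have hsum : ∑ i ∈ Finset.range n, (τ ^ i) (τ a - a) = 0 := by
    simp_rw [map_sub, ← AlgEquiv.mul_apply, ← pow_succ]
    rw [Finset.sum_range_sub (fun i => (τ ^ i) a), hn, pow_zero, sub_self]
  have hcast : (n : L) = -∑ i ∈ Finset.range n, ((τ ^ i) (τ a - a) / (τ a - a) - 1) := by
    rw [Finset.sum_sub_distrib, ← Finset.sum_div, hsum, zero_div, Finset.sum_const,
      Finset.card_range, nsmul_one, zero_sub, neg_neg]
  rw [hcast, Valuation.map_neg]
  exact Valuation.map_sum_lt _ one_ne_zero fun i _ => (pow_mem hτ i).2 _ hz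

theorem dvd_of_pow_eq_one_of_mem_ramificationGrp (p : ℕ) [CharP (ResidueField W) p]
    {τ : L ≃ₐ[K] L} (hτ : τ ∈ ramificationGrp K W) (hτ1 : τ ≠ 1) {n : ℕ} (hn : τ ^ n = 1) :
    p ∣ n := by
  rw [← CharP.cast_eq_zero_iff (ResidueField W) p, ← map_natCast (residue W),
    residue_eq_zero_iff, W.valuation_lt_one_iff]
  exact_mod_cast valuation_natCast_lt_one_of_pow_eq_one hτ hτ1 hn

end Inertia

section InertiaCharacter

variable (K : Type*) {L : Type*} [Field K] [Field L] [Algebra K L] [FiniteDimensional K L]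
  (W : ValuationSubring L)

-- Multiplicative in `σ` because `σ ∈ T` fixes the residue of every unit of `W`, in particular
-- of `τ x / x`.
noncomputable def inertiaCharacter : inertiaGrp K W →* (Lˣ → (ResidueField W)ˣ) where
  toFun σ x := W.unitGroupToResidueFieldUnits ⟨_, units_map_div_mem_unitGroup σ.2 x⟩
  map_one' := by
    funext x
    rw [Pi.one_apply, W.unitGroupToResidueFieldUnits_eq_one_iff]
    convert W.principalUnitGroup.one_mem
    ext
    simp
  map_mul' σ τ := by
    funext x
    have hσu := units_map_div_mem_principalUnitGroup σ.2 (units_map_div_mem_unitGroup τ.2 x)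
    have key : (⟨_, units_map_div_mem_unitGroup (σ * τ).2 x⟩ : W.unitGroup) =
        ⟨_, W.principal_units_le_units hσu⟩ * (⟨_, units_map_div_mem_unitGroup σ.2 x⟩ *
          ⟨_, units_map_div_mem_unitGroup τ.2 x⟩) := by
      ext
      simp
    rw [Pi.mul_apply, key, map_mul, (W.unitGroupToResidueFieldUnits_eq_one_iff _).2 hσu,
      one_mul, map_mul]

variable {K W}

theorem ker_inertiaCharacter :
    (inertiaCharacter K W).ker = (ramificationGrp K W).subgroupOf (inertiaGrp K W) := by
  ext σ
  rw [MonoidHom.mem_ker, Subgroup.mem_subgroupOf, mem_ramificationGrp_iff, funext_iff]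
  simp only [inertiaCharacter, MonoidHom.coe_mk, OneHom.coe_mk, Pi.one_apply,
    ValuationSubring.unitGroupToResidueFieldUnits_eq_one_iff]
  exact (and_iff_right σ.2).symm

end InertiaCharacter

section Ramification

variable {K L : Type*} [Field K] [Field L] [Algebra K L] [FiniteDimensional K L]
  {W : ValuationSubring L}

instance : ((ramificationGrp K W).subgroupOf (inertiaGrp K W)).Normal :=
  ker_inertiaCharacter (K := K) (W := W) ▸ MonoidHom.normal_ker _

theorem commutator_mem_ramificationGrp {σ τ : L ≃ₐ[K] L} (hσ : σ ∈ inertiaGrp K W)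
    (hτ : τ ∈ inertiaGrp K W) : σ * τ * σ⁻¹ * τ⁻¹ ∈ ramificationGrp K W := by
  have : (⟨σ, hσ⟩ * ⟨τ, hτ⟩ * ⟨σ, hσ⟩⁻¹ * ⟨τ, hτ⟩⁻¹ : inertiaGrp K W) ∈
      (inertiaCharacter K W).ker := by
    rw [MonoidHom.mem_ker, map_mul, map_mul, map_mul, map_inv, map_inv,
      mul_comm (inertiaCharacter K W _), mul_inv_cancel_right, mul_inv_cancel]
  rw [ker_inertiaCharacter, Subgroup.mem_subgroupOf] at this
  exact this

theorem not_dvd_relIndex_ramificationGrp (p : ℕ) [Fact p.Prime] [CharP (ResidueField W) p] :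
    ¬ p ∣ (ramificationGrp K W).relIndex (inertiaGrp K W) := by
  rw [Subgroup.relIndex, ← ker_inertiaCharacter, Subgroup.index_ker]
  have := Finite.of_surjective _ (inertiaCharacter K W).rangeRestrict_surjective
  refine not_dvd_card_of_forall_pow_eq_one fun f hf => Subtype.ext ?_
  exact eq_one_of_pow_expChar_eq_one p (congrArg Subtype.val hf)

theorem isPGroup_ramificationGrp (p : ℕ) [Fact p.Prime] [CharP (ResidueField W) p] :
    IsPGroup p (ramificationGrp K W) :=
  IsPGroup.of_forall_orderOf_prime fun q g hq hg => by
    have hg1 : (g : L ≃ₐ[K] L) ≠ 1 := by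
      rw [Ne, OneMemClass.coe_eq_one, ← orderOf_eq_one_iff, hg]
      exact hq.ne_one
    have hgq : (g : L ≃ₐ[K] L) ^ q = 1 := by
      rw [← Subgroup.coe_pow, ← hg, pow_orderOf_eq_one, Subgroup.coe_one]
    exact ((Nat.prime_dvd_prime_iff_eq Fact.out hq).mp
      (dvd_of_pow_eq_one_of_mem_ramificationGrp p g.2 hg1 hgq)).symm

end Ramification

theorem ramification_group_is_unique_p_sylow_general
    {K L : Type*} [Field K] [Field L] [Algebra K L]
    [FiniteDimensional K L]
    (V : ValuationSubring K) (W : ValuationSubring L)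
    (hVW : W.comap (algebraMap K L) = V)
    (p : ℕ) (hp : p.Prime) [CharP (IsLocalRing.ResidueField V) p] :
    ramificationGrp K W ≤ inertiaGrp K W ∧
    IsPGroup p ((ramificationGrp K W).subgroupOf (inertiaGrp K W)) ∧
    (∀ S : Sylow p (inertiaGrp K W),
      (S : Subgroup (inertiaGrp K W)) = (ramificationGrp K W).subgroupOf (inertiaGrp K W)) ∧
    (∀ σ τ : L ≃ₐ[K] L, σ ∈ inertiaGrp K W → τ ∈ inertiaGrp K W →
      σ * τ * σ⁻¹ * τ⁻¹ ∈ ramificationGrp K W) ∧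
    ¬ p ∣ (Nat.card (inertiaGrp K W) / Nat.card (ramificationGrp K W)) := by
  have : Fact p.Prime := ⟨hp⟩
  have := W.charP_residueField_of_comap_eq hVW p
  have hRT : ramificationGrp K W ≤ inertiaGrp K W := fun _ hσ => hσ.1
  have hR : IsPGroup p ((ramificationGrp K W).subgroupOf (inertiaGrp K W)) :=
    (isPGroup_ramificationGrp p).of_equiv (Subgroup.subgroupOfEquivOfLe hRT).symm
  have hindex := not_dvd_relIndex_ramificationGrp (K := K) (W := W) p
  refine ⟨hRT, hR, fun S => ?_, fun _ _ => commutator_mem_ramificationGrp, ?_⟩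
  · exact (hR.toSylow hindex).is_maximal' S.isPGroup' (hR.le_sylow_of_normal S)
  · rwa [Subgroup.card_div_card_eq_relIndex hRT]

/-- for a finite Galois extension `L/K` with group `G`, a valuation subring
`W` of `L` lying over `V ⊆ K` of residue characteristic `p > 0`, with inertia group `T`
and ramification group `R`: `R ≤ T`, `R` is the unique `p`-Sylow subgroup of `T`, and
`T/R` is abelian (all commutators of elements of `T` lie in `R`) of order prime to `p`. -/
theorem ramification_group_is_unique_p_sylow
    {K L : Type*} [Field K] [Field L] [Algebra K L]
    [FiniteDimensional K L] [IsGalois K L]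
    (V : ValuationSubring K) (W : ValuationSubring L)
    (hVW : W.comap (algebraMap K L) = V)
    (p : ℕ) (hp : p.Prime) [CharP (IsLocalRing.ResidueField V) p] :
    ramificationGrp K W ≤ inertiaGrp K W ∧
    IsPGroup p ((ramificationGrp K W).subgroupOf (inertiaGrp K W)) ∧
    (∀ S : Sylow p (inertiaGrp K W),
      (S : Subgroup (inertiaGrp K W)) = (ramificationGrp K W).subgroupOf (inertiaGrp K W)) ∧
    (∀ σ τ : L ≃ₐ[K] L, σ ∈ inertiaGrp K W → τ ∈ inertiaGrp K W →
      σ * τ * σ⁻¹ * τ⁻¹ ∈ ramificationGrp K W) ∧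
    ¬ p ∣ (Nat.card (inertiaGrp K W) / Nat.card (ramificationGrp K W)) :=
  ramification_group_is_unique_p_sylow_general V W hVW p hp
end

section
/- A composed valuation ring is henselian if and only if both constituents are: let V ⊆ V₁ be valuation rings of a field K with V local having maximal ideal contained in V₁, so that the image V̄ of V in the residue field k₁ of V₁ is a valuation ring of k₁ with V = preimage of V̄ under V₁ → k₁. Then V is henselian if and only if both V₁ and V̄ are henselian. -/
/-!
Write `A` for the preimage in `V₁` of `V̄ ⊆ k₁`; it contains the maximal ideal `m₁` of `V₁`, and
`A → V̄` is a surjective local homomorphism. Henselianity passes to quotients, so `V̄` is henselian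
if `A` is; and if `V₁` and `V̄` are henselian, a simple root modulo `m_A` is lifted first to a root
modulo `m₁` (Hensel in `V̄`) and then to a root (Hensel in `V₁`), which lies in `A` because
`m₁ ⊆ A`.

For `A` henselian ⇒ `V₁` henselian, given `f` monic, `c = f(a₀) ∈ m₁` and `u = f'(a₀)` a unit,
write `f(a₀ + c u⁻¹ Y) = c · h(Y)` with `h ≡ 1 + Y mod m₁`. The reversed polynomial
`g = Yⁿ h(1/Y)` is monic, congruent to `Yⁿ⁻¹(Y + 1)`, hence has coefficients in `A`, and `-1` is a simple root of it modulo `m_A`.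
A root `b ∈ A` of `g` near `-1` is a unit, and `a₀ + c u⁻¹ b⁻¹` is the required root of `f`.
-/

open Polynomial IsLocalRing

namespace Polynomial

variable {R : Type*} [CommRing R]

noncomputable def rescaledTaylor (f : R[X]) (a₀ v : R) : R[X] :=
  1 + C v * X * (taylor a₀ f).divX.comp (C (f.eval a₀ * v) * X)

theorem C_mul_rescaledTaylor (f : R[X]) (a₀ v : R) :
    C (f.eval a₀) * rescaledTaylor f a₀ v = (taylor a₀ f).comp (C (f.eval a₀ * v) * X) := by
  conv_rhs => rw [← divX_mul_X_add (taylor a₀ f)]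
  simp only [rescaledTaylor, add_comp, mul_comp, X_comp, C_comp, taylor_coeff_zero, C_mul]
  ring

theorem eval_add_mul_eq_mul_eval_rescaledTaylor (f : R[X]) (a₀ v y : R) :
    f.eval (a₀ + f.eval a₀ * v * y) = f.eval a₀ * (rescaledTaylor f a₀ v).eval y := by
  have := congrArg (eval y) (C_mul_rescaledTaylor f a₀ v)
  rw [eval_mul, eval_C, eval_comp, taylor_eval] at this
  rw [this]
  simp [add_comm]

theorem coeff_zero_rescaledTaylor (f : R[X]) (a₀ v : R) :
    (rescaledTaylor f a₀ v).coeff 0 = 1 := by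
  simp [rescaledTaylor, mul_assoc]

theorem natDegree_rescaledTaylor_le (f : R[X]) (a₀ v : R) :
    (rescaledTaylor f a₀ v).natDegree ≤ f.natDegree := by
  rcases Nat.eq_zero_or_pos f.natDegree with hf | hf
  · obtain ⟨a, rfl⟩ := natDegree_eq_zero.1 hf
    simp [rescaledTaylor]
  have hX : ∀ r : R, (C r * X).natDegree ≤ 1 := fun r => by
    simpa using natDegree_C_mul_X_pow_le r 1
  have hQ : ((taylor a₀ f).divX.comp (C (f.eval a₀ * v) * X)).natDegree ≤ f.natDegree - 1 := by
    refine natDegree_comp_le.trans ?_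
    rw [natDegree_divX_eq_natDegree_tsub_one, natDegree_taylor]
    exact (Nat.mul_le_mul_left _ (hX _)).trans (by rw [mul_one])
  refine (natDegree_add_le _ _).trans (max_le (by simp) ?_)
  refine (natDegree_mul_le.trans (add_le_add (hX v) hQ)).trans ?_
  omega

theorem map_residue_rescaledTaylor [IsLocalRing R] {f : R[X]} {a₀ : R}
    (h : f.eval a₀ ∈ maximalIdeal R) (v : R) :
    (rescaledTaylor f a₀ v).map (residue R) =
      1 + C (residue R (v * f.derivative.eval a₀)) * X := by
  have h0 : residue R (f.eval a₀ * v) = 0 :=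
    (residue_eq_zero_iff _).2 (Ideal.mul_mem_right _ _ h)
  rw [rescaledTaylor, Polynomial.map_add, Polynomial.map_one, Polynomial.map_mul,
    Polynomial.map_mul, map_C, map_X, Polynomial.map_comp, Polynomial.map_mul, map_C, map_X, h0,
    C_0, zero_mul, comp_zero, eval_map, eval₂_at_zero, coeff_divX, taylor_coeff_one, map_mul,
    C_mul]
  ring

theorem reflect_one_add_X (m : ℕ) : (1 + X : R[X]).reflect (m + 1) = X ^ m * (X + 1) := by
  rw [reflect_add, reflect_one, ← pow_one X, reflect_monomial, revAt_le (by omega),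
    Nat.add_sub_cancel]
  ring

end Polynomial

theorem HenselianLocalRing.of_surjective {R S : Type*} [CommRing R] [CommRing S]
    [HenselianLocalRing R] [Nontrivial S] (φ : R →+* S) (hφ : Function.Surjective φ) :
    HenselianLocalRing S := by
  have := IsLocalRing.of_surjective' φ hφ
  have := IsLocalHom.of_surjective φ hφ
  constructor
  intro f hf a₀ h₁ h₂
  obtain ⟨F, hFf, -, hF⟩ :=
    lifts_and_natDegree_eq_and_monic ((mem_lifts f).2 (map_surjective φ hφ f)) hf
  obtain ⟨α, rfl⟩ := hφ a₀
  rw [← hFf, eval_map_apply] at h₁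
  rw [← hFf, derivative_map, eval_map_apply] at h₂
  obtain ⟨a, ha, haα⟩ := HenselianLocalRing.is_henselian F hF α
    (by rwa [← maximalIdeal_comap φ, Ideal.mem_comap]) (isUnit_of_map_unit φ _ h₂)
  refine ⟨φ a, ?_, ?_⟩
  · rw [IsRoot, ← hFf, eval_map_apply, ha.eq_zero, map_zero]
  · rw [← map_sub]
    exact map_nonunit φ _ haα

theorem RingEquiv.henselianLocalRing_iff {R S : Type*} [CommRing R] [CommRing S] (e : R ≃+* S) :
    HenselianLocalRing R ↔ HenselianLocalRing S :=
  ⟨fun _ => have := e.injective.nontrivial; .of_surjective e.toRingHom e.surjective,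
    fun _ => have := e.symm.injective.nontrivial; .of_surjective e.symm.toRingHom e.symm.surjective⟩

namespace IsLocalRing

variable {R : Type*} [CommRing R] [IsLocalRing R]

theorem isUnit_eval_of_sub_mem {p : R[X]} {a b : R} (ha : IsUnit (p.eval a))
    (hb : b - a ∈ maximalIdeal R) : IsUnit (p.eval b) := by
  have hab : residue R b = residue R a := Ideal.Quotient.eq.2 hb
  rw [← residue_ne_zero_iff_isUnit, ← eval_map_apply, hab, eval_map_apply,
    residue_ne_zero_iff_isUnit]
  exact ha

theorem exists_monic_map_residue_eq_X_pow_mul_X_add_one {f : R[X]} (hf : f.Monic) {a₀ : R}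
    (h₁ : f.eval a₀ ∈ maximalIdeal R) (h₂ : IsUnit (f.derivative.eval a₀)) :
    ∃ (g : R[X]) (m : ℕ), g.Monic ∧ g.map (residue R) = X ^ m * (X + 1) ∧
      ∀ b : Rˣ, g.IsRoot b → ∃ a, f.IsRoot a ∧ a - a₀ ∈ maximalIdeal R := by
  obtain ⟨m, hm⟩ : ∃ m, f.natDegree = m + 1 := by
    refine Nat.exists_eq_add_one.2 (Nat.pos_of_ne_zero fun h0 => ?_)
    rw [hf.natDegree_eq_zero.1 h0, eval_one] at h₁
    exact (maximalIdeal.isMaximal R).ne_top ((Ideal.eq_top_iff_one _).2 h₁)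
  set v : R := ↑h₂.unit⁻¹
  set h := rescaledTaylor f a₀ v
  have hdeg : h.natDegree ≤ m + 1 := hm ▸ natDegree_rescaledTaylor_le f a₀ v
  refine ⟨h.reflect (m + 1), m, ?_, ?_, fun b hb => ⟨a₀ + f.eval a₀ * v * ↑b⁻¹, ?_, ?_⟩⟩
  · refine monic_of_natDegree_le_of_coeff_eq_one (m + 1) (natDegree_reflect_le.trans ?_) ?_
    · exact max_le le_rfl hdeg
    · rw [coeff_reflect, revAt_le le_rfl, Nat.sub_self, coeff_zero_rescaledTaylor]
  · rw [← reflect_map, map_residue_rescaledTaylor h₁, IsUnit.val_inv_mul, map_one, C_1, one_mul,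
      reflect_one_add_X]
  · have hb' : eval₂ (RingHom.id R) (⅟(↑b⁻¹ : R)) (h.reflect (m + 1)) = 0 := by
      rwa [invOf_units, inv_inv, eval₂_id]
    rw [eval₂_reflect_eq_zero_iff _ _ _ _ hdeg, eval₂_id] at hb'
    rw [IsRoot, eval_add_mul_eq_mul_eval_rescaledTaylor, hb', mul_zero]
  · rw [add_sub_cancel_left]
    exact Ideal.mul_mem_right _ _ (Ideal.mul_mem_right _ _ h₁)

section Subring

variable {A : Subring R}

theorem mem_maximalIdeal_of_coe_mem [IsLocalRing A] {x : A} (hx : (x : R) ∈ maximalIdeal R) :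
    x ∈ maximalIdeal A :=
  fun hu => hx (hu.map A.subtype)

theorem residue_eq_of_residue_coe_eq [IsLocalRing A] {x y : A}
    (h : residue R x = residue R y) : residue A x = residue A y := by
  rw [← sub_eq_zero, ← map_sub, residue_eq_zero_iff] at h ⊢
  exact mem_maximalIdeal_of_coe_mem h

theorem exists_lift_of_map_residue_eq [IsLocalRing A] (hA : ∀ x ∈ maximalIdeal R, x ∈ A)
    {p : R[X]} (hp : p.Monic) (q : A[X])
    (h : p.map (residue R) = (q.map A.subtype).map (residue R)) :
    ∃ pA : A[X], pA.Monic ∧ pA.map A.subtype = p ∧ pA.map (residue A) = q.map (residue A) := by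
  have hcoeff : ∀ n, residue R (p.coeff n) = residue R (q.coeff n) := fun n => by
    simpa using congrArg (coeff · n) h
  have hlifts : p ∈ lifts A.subtype := by
    refine (lifts_iff_coeff_lifts p).2 fun n => ⟨⟨p.coeff n, ?_⟩, rfl⟩
    have hsub : p.coeff n - q.coeff n ∈ maximalIdeal R := by
      rw [← residue_eq_zero_iff, map_sub, hcoeff, sub_self]
    simpa using add_mem (hA _ hsub) (q.coeff n).2
  obtain ⟨pA, hmap, -, hmonic⟩ := lifts_and_natDegree_eq_and_monic hlifts hp
  refine ⟨pA, hmonic, hmap, ext fun n => ?_⟩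
  simp only [coeff_map]
  refine residue_eq_of_residue_coe_eq ?_
  rw [← hcoeff n, ← hmap, coeff_map, Subring.subtype_apply]

theorem exists_isRoot_of_map_residue_eq_X_pow_mul_X_add_one [HenselianLocalRing A]
    (hA : ∀ x ∈ maximalIdeal R, x ∈ A) {g : R[X]} (hg : g.Monic) {m : ℕ}
    (hgm : g.map (residue R) = X ^ m * (X + 1)) : ∃ b : Rˣ, g.IsRoot b := by
  obtain ⟨gA, hmonic, hmap, hred⟩ :=
    exists_lift_of_map_residue_eq hA hg (X ^ m * (X + 1)) (by simp [hgm])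
  simp only [Polynomial.map_mul, Polynomial.map_pow, Polynomial.map_add, map_X,
    Polynomial.map_one] at hred
  have h₁ : gA.eval (-1) ∈ maximalIdeal A := by
    rw [← residue_eq_zero_iff, ← eval_map_apply, hred]
    simp
  have h₂ : IsUnit (gA.derivative.eval (-1)) := by
    rw [← residue_ne_zero_iff_isUnit, ← eval_map_apply, ← derivative_map, hred]
    simp
  obtain ⟨b, hb, hb1⟩ := HenselianLocalRing.is_henselian gA hmonic (-1) h₁ h₂
  have hbu : IsUnit b := by
    rw [← residue_ne_zero_iff_isUnit]
    rw [sub_neg_eq_add, ← residue_eq_zero_iff, map_add, map_one, add_eq_zero_iff_eq_neg] at hb1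
    simp [hb1]
  refine ⟨(hbu.map A.subtype).unit, ?_⟩
  rw [IsUnit.unit_spec, IsRoot, ← hmap, eval_map_apply, hb.eq_zero, map_zero]

end Subring

end IsLocalRing

theorem HenselianLocalRing.of_subring {R : Type*} [CommRing R] [IsLocalRing R] (A : Subring R)
    [HenselianLocalRing A] (hA : ∀ x ∈ maximalIdeal R, x ∈ A) : HenselianLocalRing R := by
  constructor
  intro f hf a₀ h₁ h₂
  obtain ⟨g, m, hg, hgm, hroot⟩ := exists_monic_map_residue_eq_X_pow_mul_X_add_one hf h₁ h₂
  obtain ⟨b, hb⟩ := exists_isRoot_of_map_residue_eq_X_pow_mul_X_add_one hA hg hgm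
  exact hroot b hb

namespace IsLocalRing

variable {R : Type*} [CommRing R] [IsLocalRing R] (B : Subring (ResidueField R))

theorem mem_comap_residue_of_mem_maximalIdeal {x : R} (hx : x ∈ maximalIdeal R) :
    x ∈ B.comap (residue R) := by
  rw [Subring.mem_comap, (residue_eq_zero_iff x).2 hx]
  exact B.zero_mem

noncomputable def residueComap : B.comap (residue R) →+* B :=
  (residue R).restrict _ B fun _ hx => hx

theorem coe_residueComap (x : B.comap (residue R)) :
    (residueComap B x : ResidueField R) = residue R x :=
  rfl

theorem residueComap_surjective : Function.Surjective (residueComap B) := fun ⟨y, hy⟩ => by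
  obtain ⟨x, rfl⟩ := residue_surjective y
  exact ⟨⟨x, hy⟩, rfl⟩

instance : IsLocalHom (residueComap B) where
  map_nonunit x hx := by
    obtain ⟨y, hy⟩ := hx.exists_right_inv
    have hy' : residue R x * y = 1 := congrArg Subtype.val hy
    obtain ⟨u, hu⟩ : IsUnit (x : R) :=
      (residue_ne_zero_iff_isUnit _).1 (left_ne_zero_of_mul_eq_one hy')
    have hinv : residue R ↑u⁻¹ = y :=
      calc residue R ↑u⁻¹ = residue R ↑u⁻¹ * (residue R x * y) := by rw [hy', mul_one]
        _ = y := by rw [← mul_assoc, ← map_mul, ← hu, u.inv_mul, map_one, one_mul]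
    refine .of_mul_eq_one ⟨↑u⁻¹, show residue R _ ∈ B from hinv ▸ y.2⟩ (Subtype.ext ?_)
    simp [← hu]

instance [IsLocalRing B] : IsLocalRing (B.comap (residue R)) :=
  (residueComap B).domain_isLocalRing


theorem residueComap_eq_zero_iff (x : B.comap (residue R)) :
    residueComap B x = 0 ↔ (x : R) ∈ maximalIdeal R := by
  rw [← residue_eq_zero_iff, ← coe_residueComap, ZeroMemClass.coe_eq_zero]

theorem henselianLocalRing_comap_residue (hR : HenselianLocalRing R) [HenselianLocalRing B] :
    HenselianLocalRing (B.comap (residue R)) := by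
  constructor
  intro f hf α h₁ h₂
  let ρ := residueComap B
  obtain ⟨β', hβ', hβα'⟩ := HenselianLocalRing.is_henselian (f.map ρ) (hf.map ρ) (ρ α)
    (by rw [eval_map_apply]; exact map_nonunit ρ _ h₁)
    (by rw [derivative_map, eval_map_apply]; exact h₂.map ρ)
  obtain ⟨β, rfl⟩ := residueComap_surjective B β'
  have hβα : β - α ∈ maximalIdeal (B.comap (residue R)) := fun hu => hβα' (by simpa using hu.map ρ)
  have hfβ : (↑(f.eval β) : R) ∈ maximalIdeal R := by
    rw [← residueComap_eq_zero_iff, ← eval_map_apply]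
    exact hβ'
  obtain ⟨a, ha, haβ⟩ := hR.is_henselian (f.map (B.comap (residue R)).subtype) (hf.map _) β
    (by rwa [← Subring.subtype_apply, eval_map_apply])
    (by rw [derivative_map, ← Subring.subtype_apply, eval_map_apply]; exact (isUnit_eval_of_sub_mem h₂ hβα).map _)
  have haA : a ∈ B.comap (residue R) := by
    simpa using add_mem (mem_comap_residue_of_mem_maximalIdeal B haβ) β.2
  refine ⟨⟨a, haA⟩, Subtype.ext ?_, ?_⟩
  · rw [← Subring.subtype_apply, ← eval_map_apply]
    exact ha
  · rw [← sub_add_sub_cancel _ β]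
    exact add_mem (mem_maximalIdeal_of_coe_mem haβ) hβα

theorem henselianLocalRing_comap_residue_iff :
    HenselianLocalRing (B.comap (residue R)) ↔ HenselianLocalRing R ∧ HenselianLocalRing B :=
  ⟨fun _ => ⟨.of_subring _ fun _ => mem_comap_residue_of_mem_maximalIdeal B,
      .of_surjective _ (residueComap_surjective B)⟩,
    fun ⟨hR, _⟩ => henselianLocalRing_comap_residue B hR⟩

end IsLocalRing

/-- a composed valuation ring is henselian iff both constituents are.
Let `V₁` be a valuation subring of a field `K` with residue field `k₁`, and let `V̄` be a
valuation subring of `k₁`.  Let `V` be the preimage of `V̄` under the residue map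
`V₁ → k₁` (viewed as a subring of `K`).  Then `V` is henselian if and only if both `V₁`
and `V̄` are henselian. -/
theorem composed_valuation_henselian_iff
    {K : Type*} [Field K] (V₁ : ValuationSubring K)
    (Vbar : ValuationSubring (IsLocalRing.ResidueField V₁)) :
    HenselianLocalRing
        ((Vbar.toSubring.comap (IsLocalRing.residue V₁)).map V₁.toSubring.subtype) ↔
      (HenselianLocalRing V₁ ∧ HenselianLocalRing Vbar) := by
  rw [← (Subring.equivMapOfInjective _ _ V₁.toSubring.subtype_injective).henselianLocalRing_iff]
  exact henselianLocalRing_comap_residue_iff Vbar.toSubring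
end
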